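/- Let X be the solution of the recursive distributional equation X =_d √U·X + √U·(1−√U). Then for every real ε > 0 and every integer k ≥ 1, P(X ≥ 1 − ε) ≤ 2^{k(k+3)/4}·ε^{k/2}. -/

import Mathlib

/-!
Writing `S = √U`, one has `1 - (S·X + S·(1 - S)) = (1 - S)² + S·(1 - X)`. Once `X ≤ 1` almost
surely is known, the event `S·X + S·(1 - S) ≥ 1 - ε` therefore forces `(1 - S)² ≤ ε`, i.e.
`U ≥ (1 - √ε)²` (probability at most `2√ε`), and, for `ε ≤ 1/4`, `X ≥ 1 - 2ε`. Independence gives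
`P(X ≥ 1 - ε) ≤ 2√ε · P(X ≥ 1 - 2ε)`, and iterating this `k` times yields the bound; for
`ε > 1/4` the bound is at least `1`.
-/

open MeasureTheory

noncomputable section

/-- The uniform distribution on `[0,1]`. -/
def unif : Measure ℝ := volume.restrict (Set.Icc 0 1)

/-- The map `(x, u) ↦ √u·x + √u·(1 − √u)`. -/
def rdeMap (q : ℝ × ℝ) : ℝ :=
  Real.sqrt q.2 * q.1 + Real.sqrt q.2 * (1 - Real.sqrt q.2)

/-- `μ` is a (probability) solution of the recursive distributional equation
`X =_d √U·X + √U·(1 − √U)` with `X, U` independent and `U` uniform on `[0,1]`. -/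
def IsRDESolution (μ : Measure ℝ) : Prop :=
  IsProbabilityMeasure μ ∧ Measure.map rdeMap (μ.prod unif) = μ

open Set

instance : IsProbabilityMeasure unif := ⟨by simp [unif, Real.volume_Icc]⟩

lemma unif_Icc {a b : ℝ} (ha : 0 ≤ a) (hb : b ≤ 1) :
    unif (Icc a b) = ENNReal.ofReal (b - a) := by
  rw [unif, Measure.restrict_apply measurableSet_Icc, Icc_inter_Icc, max_eq_left ha,
    min_eq_left hb, Real.volume_Icc]

lemma measurable_rdeMap : Measurable rdeMap := by
  unfold rdeMap; fun_prop

lemma ae_snd_mem_Icc (μ : Measure ℝ) : ∀ᵐ q ∂μ.prod unif, q.2 ∈ Icc (0 : ℝ) 1 :=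
  Measure.quasiMeasurePreserving_snd.ae (ae_restrict_mem measurableSet_Icc)

lemma IsRDESolution.measure_le {μ : Measure ℝ} (hμ : IsRDESolution μ) {s : Set ℝ}
    (hs : MeasurableSet s) {T : Set (ℝ × ℝ)}
    (hT : ∀ x u, u ∈ Icc (0 : ℝ) 1 → rdeMap (x, u) ∈ s → (x, u) ∈ T) :
    μ s ≤ μ.prod unif T := by
  conv_lhs => rw [← hμ.2, Measure.map_apply measurable_rdeMap hs]
  refine measure_mono_ae ?_
  filter_upwards [ae_snd_mem_Icc μ] with ⟨x, u⟩ hu hmem using hT x u hu hmem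

lemma rdeMap_le_one_of_le_one {x u : ℝ} (hu : u ∈ Icc (0 : ℝ) 1) (hx : x ≤ 1) :
    rdeMap (x, u) ≤ 1 := by
  have hs0 : 0 ≤ √u := Real.sqrt_nonneg u
  have hs1 : √u ≤ 1 := Real.sqrt_le_one.mpr hu.2
  simp only [rdeMap]
  nlinarith [mul_le_mul_of_nonneg_left hx hs0]

lemma rdeMap_le_one_of_le {x u M : ℝ} (hx : 0 ≤ x) (hxM : x ≤ M)
    (hu : u ∈ Icc 0 ((M + 1)⁻¹ ^ 2)) : rdeMap (x, u) ≤ 1 := by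
  have hM : 0 < M + 1 := by linarith
  have hs0 : 0 ≤ √u := Real.sqrt_nonneg u
  have hs : √u * (M + 1) ≤ 1 := by
    rw [← le_div_iff₀ hM, one_div]
    exact (Real.sqrt_le_left (by positivity)).mpr hu.2
  simp only [rdeMap]
  nlinarith [mul_le_mul_of_nonneg_left hxM hs0]

/-- The event `√U·X + √U·(1 - √U) > 1` forces `X > 1` but excludes `X ∈ (1, n]` for small `U`,
so mass in `(1, n]` would make `P(X > 1)` strictly smaller than itself. -/
lemma IsRDESolution.measure_Ioi_one {μ : Measure ℝ} (hμ : IsRDESolution μ) :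
    μ (Ioi 1) = 0 := by
  have := hμ.1
  suffices hIoc : ∀ n : ℕ, μ (Ioc 1 n) = 0 by
    rw [← iUnion_Ioc_eq_Ioi_self_iff.mpr fun x _ ↦ exists_nat_ge x]
    exact measure_iUnion_null hIoc
  intro n
  set δ : ℝ := ((n : ℝ) + 1)⁻¹ ^ 2
  set B : Set (ℝ × ℝ) := Ioc 1 (n : ℝ) ×ˢ Icc 0 δ
  have hB : B ⊆ Ioi 1 ×ˢ univ := prod_mono Ioc_subset_Ioi_self (subset_univ _)
  have hμB : μ.prod unif B ≤ μ (Ioi 1) := by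
    simpa [Measure.prod_prod] using measure_mono (μ := μ.prod unif) hB
  have hle : μ (Ioi 1) ≤ μ (Ioi 1) - μ.prod unif B := by
    calc μ (Ioi 1) ≤ μ.prod unif (Ioi 1 ×ˢ univ \ B) := by
          refine hμ.measure_le measurableSet_Ioi fun x u hu hmem ↦ ?_
          have hx : 1 < x := lt_of_not_ge fun hx ↦ (rdeMap_le_one_of_le_one hu hx).not_gt hmem
          exact ⟨⟨hx, trivial⟩, fun hxu ↦
            (rdeMap_le_one_of_le (by linarith) hxu.1.2 hxu.2).not_gt hmem⟩
      _ = μ (Ioi 1) - μ.prod unif B := by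
          rw [measure_sdiff hB (measurableSet_Ioc.prod measurableSet_Icc).nullMeasurableSet
            (measure_ne_top _ _), Measure.prod_prod, measure_univ, mul_one]
  rw [ENNReal.le_sub_iff_add_le_left (measure_ne_top _ _) hμB] at hle
  have hB0 : μ.prod unif B = 0 := nonpos_iff_eq_zero.1
    ((ENNReal.add_le_add_iff_right (measure_ne_top _ _)).1 (by rwa [zero_add]))
  have hδ : δ ≤ 1 :=
    pow_le_one₀ (by positivity) (inv_le_one_of_one_le₀ (by linarith [n.cast_nonneg (α := ℝ)]))
  rw [Measure.prod_prod, unif_Icc le_rfl hδ, mul_eq_zero] at hB0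
  exact hB0.resolve_right (by simp [δ]; positivity)

lemma rdeMap_near_one {ε x u : ℝ} (hε : ε ≤ 1 / 4) (hu : u ∈ Icc (0 : ℝ) 1) (hx : x ≤ 1)
    (h : 1 - ε ≤ rdeMap (x, u)) : 1 - 2 * ε ≤ x ∧ (1 - √ε) ^ 2 ≤ u := by
  set s := √u
  have hs0 : 0 ≤ s := Real.sqrt_nonneg u
  have hss : s ^ 2 = u := Real.sq_sqrt hu.1
  have hx' : 0 ≤ s * (1 - x) := mul_nonneg hs0 (by linarith)
  -- `1 - rdeMap (x, u) = (1 - s)² + s (1 - x)`, and both summands are nonnegative.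
  have hsq : (1 - s) ^ 2 ≤ ε := by simp only [rdeMap] at h; nlinarith
  have hs : 1 - √ε ≤ s := by
    have := Real.sqrt_le_sqrt hsq
    rw [Real.sqrt_sq_eq_abs] at this
    linarith [le_abs_self (1 - s)]
  have hε0 : 0 ≤ ε := le_trans (sq_nonneg _) hsq
  have hsε : √ε ≤ 1 / 2 := Real.sqrt_le_left (by norm_num) |>.mpr (by linarith)
  refine ⟨?_, hss ▸ pow_le_pow_left₀ (by linarith) hs 2⟩
  simp only [rdeMap] at h
  nlinarith

lemma IsRDESolution.measure_Ici_le {μ : Measure ℝ} (hμ : IsRDESolution μ) {ε : ℝ}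
    (hε0 : 0 < ε) (hε : ε ≤ 1 / 4) :
    μ.real (Ici (1 - ε)) ≤ μ.real (Ici (1 - 2 * ε)) * (2 * √ε) := by
  have := hμ.1
  set a := (1 - √ε) ^ 2
  have hsε : √ε ≤ 1 := Real.sqrt_le_one.mpr (by linarith)
  have hle : μ (Ici (1 - ε)) ≤ μ (Ici (1 - 2 * ε)) * unif (Icc a 1) := calc
    μ (Ici (1 - ε)) ≤ μ.prod unif (Ici (1 - 2 * ε) ×ˢ Icc a 1 ∪ Ioi 1 ×ˢ univ) := by
        refine hμ.measure_le measurableSet_Ici fun x u hu hmem ↦ ?_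
        rcases le_or_gt x 1 with hx | hx
        · obtain ⟨hx', hu'⟩ := rdeMap_near_one hε hu hx hmem
          exact Or.inl ⟨hx', hu', hu.2⟩
        · exact Or.inr ⟨hx, trivial⟩
    _ ≤ μ.prod unif (Ici (1 - 2 * ε) ×ˢ Icc a 1) + μ.prod unif (Ioi 1 ×ˢ univ) :=
        measure_union_le _ _
    _ = μ (Ici (1 - 2 * ε)) * unif (Icc a 1) := by
        rw [Measure.prod_prod, Measure.prod_prod, hμ.measure_Ioi_one, zero_mul, add_zero]
  have hunif : unif.real (Icc a 1) ≤ 2 * √ε := by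
    rw [measureReal_def, unif_Icc (sq_nonneg _) (by nlinarith [Real.sqrt_nonneg ε]),
      ENNReal.toReal_ofReal (by nlinarith [Real.sqrt_nonneg ε])]
    nlinarith [Real.sq_sqrt hε0.le]
  calc μ.real (Ici (1 - ε)) ≤ μ.real (Ici (1 - 2 * ε)) * unif.real (Icc a 1) := by
        simpa [measureReal_def, ENNReal.toReal_mul] using
          ENNReal.toReal_mono (by finiteness) hle
    _ ≤ μ.real (Ici (1 - 2 * ε)) * (2 * √ε) := by gcongr

def tailBound (k : ℕ) (ε : ℝ) : ℝ :=
  (2 : ℝ) ^ (((k : ℝ) * ((k : ℝ) + 3)) / 4) * ε ^ ((k : ℝ) / 2)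

lemma tailBound_zero (ε : ℝ) : tailBound 0 ε = 1 := by
  simp [tailBound]

lemma tailBound_succ (k : ℕ) {ε : ℝ} (hε : 0 < ε) :
    tailBound (k + 1) ε = tailBound k (2 * ε) * (2 * √ε) := by
  rw [tailBound, tailBound, Real.sqrt_eq_rpow, Real.mul_rpow zero_le_two hε.le]
  push_cast
  -- `(k + 1)(k + 4)/4 = k(k + 3)/4 + k/2 + 1`
  calc (2 : ℝ) ^ (((k : ℝ) + 1) * ((k : ℝ) + 1 + 3) / 4) * ε ^ (((k : ℝ) + 1) / 2)
      = 2 ^ ((k : ℝ) * (k + 3) / 4) * 2 ^ ((k : ℝ) / 2) * 2 ^ (1 : ℝ)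
          * (ε ^ ((k : ℝ) / 2) * ε ^ (1 / 2 : ℝ)) := by
        rw [← Real.rpow_add two_pos, ← Real.rpow_add two_pos, ← Real.rpow_add hε]
        ring_nf
    _ = _ := by rw [Real.rpow_one]; ring

lemma one_le_tailBound (k : ℕ) {ε : ℝ} (hε : 1 / 4 ≤ ε) : 1 ≤ tailBound k ε := by
  have hquarter : ((1 : ℝ) / 4) ^ ((k : ℝ) / 2) = 2 ^ (-(k : ℝ)) := by
    rw [show (1 : ℝ) / 4 = 2 ^ (-2 : ℝ) by norm_num, ← Real.rpow_mul zero_le_two]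
    ring_nf
  have hk : 0 ≤ (k : ℝ) * (k - 1) := by
    rcases Nat.eq_zero_or_pos k with rfl | hk
    · simp
    · exact mul_nonneg k.cast_nonneg (sub_nonneg.2 (Nat.one_le_cast.2 hk))
  calc (1 : ℝ) ≤ 2 ^ ((k : ℝ) * (k + 3) / 4 + -k) :=
        Real.one_le_rpow one_le_two (by linarith)
    _ = 2 ^ ((k : ℝ) * (k + 3) / 4) * (1 / 4) ^ ((k : ℝ) / 2) := by
        rw [hquarter, Real.rpow_add two_pos]
    _ ≤ tailBound k ε := by unfold tailBound; gcongr

lemma IsRDESolution.measure_Ici_le_tailBound {μ : Measure ℝ} (hμ : IsRDESolution μ)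
    (k : ℕ) : ∀ ε : ℝ, 0 < ε → μ.real (Ici (1 - ε)) ≤ tailBound k ε := by
  have := hμ.1
  induction k with
  | zero => exact fun ε _ ↦ (tailBound_zero ε).symm ▸ measureReal_le_one
  | succ k ih =>
    intro ε hε
    rcases le_or_gt ε (1 / 4) with hsmall | hlarge
    · calc μ.real (Ici (1 - ε)) ≤ μ.real (Ici (1 - 2 * ε)) * (2 * √ε) :=
            hμ.measure_Ici_le hε hsmall
        _ ≤ tailBound k (2 * ε) * (2 * √ε) := by gcongr; exact ih _ (by positivity)
        _ = tailBound (k + 1) ε := (tailBound_succ k hε).symm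
    · exact measureReal_le_one.trans (one_le_tailBound _ hlarge.le)

theorem rde_tail_bound_general (μ : Measure ℝ) (hμ : IsRDESolution μ)
    (ε : ℝ) (hε : 0 < ε) (k : ℕ) :
    (μ (Set.Ici (1 - ε))).toReal
      ≤ (2 : ℝ) ^ (((k : ℝ) * ((k : ℝ) + 3)) / 4) * ε ^ ((k : ℝ) / 2) :=
  hμ.measure_Ici_le_tailBound k ε hε

/-- Tail bound for the solution `X` of the RDE `X =_d √U·X + √U·(1 − √U)`: for every
`ε > 0` and every integer `k ≥ 1`, `P(X ≥ 1 − ε) ≤ 2^{k(k+3)/4}·ε^{k/2}`. -/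
theorem rde_tail_bound (μ : Measure ℝ) (hμ : IsRDESolution μ)
    (ε : ℝ) (hε : 0 < ε) (k : ℕ) (hk : 1 ≤ k) :
    (μ (Set.Ici (1 - ε))).toReal
      ≤ (2 : ℝ) ^ (((k : ℝ) * ((k : ℝ) + 3)) / 4) * ε ^ ((k : ℝ) / 2) :=
  rde_tail_bound_general μ hμ ε hε k
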